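/- arXiv:0908.0423 — 2 statements merged into one kernel-verified Lean document; each statement's English description precedes it below -/
import Mathlib

section
/- Let φ : M → N be a smooth map between Riemannian manifolds and Φ = φ_* : TM → TN its differential. For X, ξ ∈ T_xM, the second differential satisfies Φ_*(X^v_ξ) = (φ_*X)^v_{φ_*ξ} and Φ_*(X^h_ξ) = (φ_*X)^h_{φ_*ξ} + (B(X,ξ))^v_{φ_*ξ}, where B is the second fundamental form of φ and (·)^h, (·)^v denote horizontal and vertical lifts determined by the Levi-Civita connections. -/
open Function
open scoped BigOperators

noncomputable section

/-- A Riemannian metric on a vector space regarded as a global chart of a manifold: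
a symmetric, positive definite, smoothly point-dependent bilinear form. -/
def IsMetric {P : Type*} [NormedAddCommGroup P] [NormedSpace ℝ P]
    (g : P → P → P → ℝ) : Prop :=
  (∀ x u v, g x u v = g x v u) ∧
  (∀ x u, u ≠ 0 → 0 < g x u u) ∧
  (∀ x v, IsLinearMap ℝ (fun u => g x u v)) ∧
  (∀ u v, ContDiff ℝ (⊤ : ℕ∞) fun x => g x u v)

/-- Christoffel symbols: a smoothly point-dependent bilinear map. -/
def IsChristoffel {P : Type*} [NormedAddCommGroup P] [NormedSpace ℝ P]
    (Γ : P → P → P → P) : Prop :=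
  (∀ x v, IsLinearMap ℝ (fun u => Γ x u v)) ∧
  (∀ x u, IsLinearMap ℝ (fun v => Γ x u v)) ∧
  (∀ u v, ContDiff ℝ (⊤ : ℕ∞) fun x => Γ x u v)

/-- `Γ` are the Christoffel symbols of the Levi-Civita connection of the metric `g`:
they are symmetric (torsion-free) and the metric is covariantly constant. -/
def IsLeviCivita {P : Type*} [NormedAddCommGroup P] [NormedSpace ℝ P]
    (g : P → P → P → ℝ) (Γ : P → P → P → P) : Prop :=
  IsChristoffel Γ ∧
  (∀ x u v, Γ x u v = Γ x v u) ∧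
  (∀ x u v w, fderiv ℝ (fun y => g y u v) x w = g x (Γ x w u) v + g x u (Γ x w v))

variable {E : Type*} [NormedAddCommGroup E] [NormedSpace ℝ E]
variable {F : Type*} [NormedAddCommGroup F] [NormedSpace ℝ F]

/-- The second fundamental form `B = ∇ φ_*` of a map `φ`, in global charts:
`B(X,Y) = ∇^φ_X φ_* Y - φ_*(∇^M_X Y)`. -/
def sff (ΓM : E → E → E → E) (ΓN : F → F → F → F) (φ : E → F) (x X Y : E) : F :=
  fderiv ℝ (fun y => fderiv ℝ φ y Y) x X
    + ΓN (φ x) (fderiv ℝ φ x X) (fderiv ℝ φ x Y)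
    - fderiv ℝ φ x (ΓM x X Y)

/-- The differential `Φ = φ_* : TM → TN` in global charts (`TM = E × E`, `TN = F × F`). -/
def tmap (φ : E → F) : E × E → F × F := fun z => (φ z.1, fderiv ℝ φ z.1 z.2)

/-- The horizontal lift `u^h_ξ ∈ T_ξ TM` (at base point `x`), in global charts:
the kernel of the connection map `K(a,b) = b + Γ_x(a, ξ)`. -/
def hlift {P : Type*} [NormedAddCommGroup P] [NormedSpace ℝ P]
    (Γ : P → P → P → P) (x ξ u : P) : P × P := (u, -Γ x u ξ)

/-- The vertical lift `w^v_ξ ∈ T_ξ TM` in global charts. -/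
def vlift {P : Type*} [NormedAddCommGroup P] [NormedSpace ℝ P] (w : P) : P × P := (0, w)

/-- The Cheeger–Gromoll type metric `h_{p,q,α}` at the point `ξ ∈ T_x M`, evaluated on
`A, B ∈ T_ξ TM`, in global charts:  `h(A,B) = g(π_* A, π_* B) + ω_α(ξ)^p (g(KA,KB) + q g(KA,ξ) g(KB,ξ))`
where `ω_α(ξ) = (1 + α g(ξ,ξ))⁻¹` and `K(a,b) = b + Γ_x(a,ξ)` is the connection map. -/
def cg {P : Type*} [NormedAddCommGroup P] [NormedSpace ℝ P]
    (g : P → P → P → ℝ) (Γ : P → P → P → P) (p q α : ℝ) (x ξ : P) (A B : P × P) : ℝ :=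
  g x A.1 B.1 + ((1 + α * g x ξ ξ)⁻¹) ^ p *
    (g x (A.2 + Γ x A.1 ξ) (B.2 + Γ x B.1 ξ)
      + q * g x (A.2 + Γ x A.1 ξ) ξ * g x (B.2 + Γ x B.1 ξ) ξ)

/-- The horizontal space `H^φ_x = (ker φ_{*x})^⊥` of a map `φ` at `x`, w.r.t. the metric `g`. -/
def Hor (g : E → E → E → ℝ) (φ : E → F) (x : E) : Set E :=
  {X | ∀ Z, fderiv ℝ φ x Z = 0 → g x X Z = 0}

/-- `φ` is a horizontally conformal submersion with dilatation `lam`. -/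
def HCSub (g : E → E → E → ℝ) (gN : F → F → F → ℝ) (φ : E → F) (lam : E → ℝ) : Prop :=
  (∀ x, Surjective (fderiv ℝ φ x)) ∧ (∀ x, 0 < lam x) ∧
  ∀ x, ∀ X ∈ Hor g φ x, ∀ Y ∈ Hor g φ x,
    gN (φ x) (fderiv ℝ φ x X) (fderiv ℝ φ x Y) = lam x * g x X Y

/-- The horizontal space of `Φ = φ_* : TM → TN` at `z = (x,ξ)`, i.e. the orthogonal
complement of `ker Φ_*` with respect to the Cheeger–Gromoll type metric `h_{p,q,α}`. -/
def HorT (g : E → E → E → ℝ) (Γ : E → E → E → E) (p q α : ℝ) (φ : E → F) (z : E × E) :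
    Set (E × E) :=
  {A | ∀ A', fderiv ℝ (tmap φ) z A' = 0 → cg g Γ p q α z.1 z.2 A A' = 0}

/-- `Φ = φ_* : (TM, h_{p,q,α}) → (TN, h_{r,s,β})` is a horizontally conformal submersion
with dilatation `Lam`. -/
def HCSubT (g : E → E → E → ℝ) (Γ : E → E → E → E) (p q α : ℝ)
    (gN : F → F → F → ℝ) (ΓN : F → F → F → F) (r s β : ℝ)
    (φ : E → F) (Lam : E × E → ℝ) : Prop :=
  (∀ z, Surjective (fderiv ℝ (tmap φ) z)) ∧ (∀ z, 0 < Lam z) ∧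
  ∀ z : E × E, ∀ A ∈ HorT g Γ p q α φ z, ∀ A' ∈ HorT g Γ p q α φ z,
    cg gN ΓN r s β (φ z.1) (fderiv ℝ φ z.1 z.2)
        (fderiv ℝ (tmap φ) z A) (fderiv ℝ (tmap φ) z A')
      = Lam z * cg g Γ p q α z.1 z.2 A A'

/-- `φ` is horizontally conformal with dilatation `lam` (general form, allowing critical
points: at each point either `φ_{*x} = 0`, or `φ_{*x}` is a surjective conformal map on
the horizontal space with positive factor `lam x`). -/
def HorizConf (g : E → E → E → ℝ) (gN : F → F → F → ℝ) (φ : E → F) (lam : E → ℝ) : Prop :=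
  ∀ x, fderiv ℝ φ x = 0 ∨
    (0 < lam x ∧ Surjective (fderiv ℝ φ x) ∧
      ∀ X ∈ Hor g φ x, ∀ Y ∈ Hor g φ x,
        gN (φ x) (fderiv ℝ φ x X) (fderiv ℝ φ x Y) = lam x * g x X Y)

/-- `Φ = φ_* : (TM, h_{p,q,α}) → (TN, h_{r,s,β})` is horizontally conformal with
dilatation `Lam` (general form, allowing critical points). -/
def HorizConfT (g : E → E → E → ℝ) (Γ : E → E → E → E) (p q α : ℝ)
    (gN : F → F → F → ℝ) (ΓN : F → F → F → F) (r s β : ℝ)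
    (φ : E → F) (Lam : E × E → ℝ) : Prop :=
  ∀ z : E × E, fderiv ℝ (tmap φ) z = 0 ∨
    (0 < Lam z ∧ Surjective (fderiv ℝ (tmap φ) z) ∧
      ∀ A ∈ HorT g Γ p q α φ z, ∀ A' ∈ HorT g Γ p q α φ z,
        cg gN ΓN r s β (φ z.1) (fderiv ℝ φ z.1 z.2)
            (fderiv ℝ (tmap φ) z A) (fderiv ℝ (tmap φ) z A')
          = Lam z * cg g Γ p q α z.1 z.2 A A')

/-- `φ` is a harmonic map: its tension field, the `g`-trace of the second fundamental
form, vanishes (computed in any `g`-orthonormal basis). -/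
def Harmonic (g : E → E → E → ℝ) (ΓM : E → E → E → E) (ΓN : F → F → F → F)
    (φ : E → F) : Prop :=
  ∀ (x : E) (n : ℕ) (e : Fin n → E),
    (∀ i j, g x (e i) (e j) = if i = j then 1 else 0) →
    Submodule.span ℝ (Set.range e) = ⊤ →
    ∑ i, sff ΓM ΓN φ x (e i) (e i) = 0

/-- The tensor `S` measuring the change of the Levi-Civita connection under the conformal
change `g ↦ λ g`:  `S(X,Y) = (1/(2λ))((Xλ)Y + (Yλ)X − g(X,Y) grad λ)`. -/
def Sconf (g : E → E → E → ℝ) (lam : E → ℝ) (gradlam : E → E) (x X Y : E) : E :=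
  (2 * lam x)⁻¹ • ((fderiv ℝ lam x X) • Y + (fderiv ℝ lam x Y) • X - (g x X Y) • gradlam x)

section SecondDifferential

variable {φ : E → F} {x : E}

theorem fderiv_fderiv_apply_eq (hφ' : DifferentiableAt ℝ (fderiv ℝ φ) x) (v w : E) :
    fderiv ℝ (fun y => fderiv ℝ φ y v) x w = fderiv ℝ (fderiv ℝ φ) x w v := by
  rw [fderiv_clm_apply hφ' (differentiableAt_const v)]
  simp

theorem fderiv_tmap_apply (hφ : DifferentiableAt ℝ φ x)
    (hφ' : DifferentiableAt ℝ (fderiv ℝ φ) x) (ξ a b : E) :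
    fderiv ℝ (tmap φ) (x, ξ) (a, b)
      = (fderiv ℝ φ x a, fderiv ℝ φ x b + fderiv ℝ (fun y => fderiv ℝ φ y ξ) x a) := by
  have hbase : HasFDerivAt (fun z : E × E => φ z.1)
      ((fderiv ℝ φ x).comp (ContinuousLinearMap.fst ℝ E E)) (x, ξ) :=
    hφ.hasFDerivAt.comp (x, ξ) hasFDerivAt_fst
  have hfiber : HasFDerivAt (fun z : E × E => fderiv ℝ φ z.1 z.2)
      ((fderiv ℝ φ (x, ξ).1).comp (ContinuousLinearMap.snd ℝ E E)
        + ((fderiv ℝ (fderiv ℝ φ) x).comp (ContinuousLinearMap.fst ℝ E E)).flip (x, ξ).2) (x, ξ) :=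
    (hφ'.hasFDerivAt.comp (x, ξ) hasFDerivAt_fst).clm_apply hasFDerivAt_snd
  have htmap : HasFDerivAt (tmap φ) _ (x, ξ) := hbase.prodMk hfiber
  rw [htmap.fderiv, fderiv_fderiv_apply_eq hφ']
  simp

theorem fderiv_tmap_vlift (hφ : DifferentiableAt ℝ φ x)
    (hφ' : DifferentiableAt ℝ (fderiv ℝ φ) x) (ξ X : E) :
    fderiv ℝ (tmap φ) (x, ξ) (vlift X) = vlift (fderiv ℝ φ x X) := by
  simp [vlift, fderiv_tmap_apply hφ hφ']

theorem fderiv_tmap_hlift (hφ : DifferentiableAt ℝ φ x)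
    (hφ' : DifferentiableAt ℝ (fderiv ℝ φ) x) (ΓM : E → E → E → E) (ΓN : F → F → F → F)
    (ξ X : E) :
    fderiv ℝ (tmap φ) (x, ξ) (hlift ΓM x ξ X)
      = hlift ΓN (φ x) (fderiv ℝ φ x ξ) (fderiv ℝ φ x X) + vlift (sff ΓM ΓN φ x X ξ) := by
  simp only [hlift, vlift, sff, fderiv_tmap_apply hφ hφ', map_neg, Prod.mk_add_mk, add_zero]
  congr 1
  abel

end SecondDifferential

theorem stmt1_general
    (ΓM : E → E → E → E) (ΓN : F → F → F → F)
    (φ : E → F) (hφ : ContDiff ℝ (⊤ : ℕ∞) φ)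
    (x ξ X : E) :
    fderiv ℝ (tmap φ) (x, ξ) (vlift X) = vlift (fderiv ℝ φ x X) ∧
    fderiv ℝ (tmap φ) (x, ξ) (hlift ΓM x ξ X)
      = hlift ΓN (φ x) (fderiv ℝ φ x ξ) (fderiv ℝ φ x X) + vlift (sff ΓM ΓN φ x X ξ) := by
  have hφx : DifferentiableAt ℝ φ x := (hφ.differentiable (by simp)).differentiableAt
  have hφ'x : DifferentiableAt ℝ (fderiv ℝ φ) x :=
    ((hφ.fderiv_right (m := 1) (WithTop.coe_le_coe.mpr le_top)).differentiable
      (by simp)).differentiableAt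
  exact ⟨fderiv_tmap_vlift hφx hφ'x ξ X, fderiv_tmap_hlift hφx hφ'x ΓM ΓN ξ X⟩

/-- Lemma 1 of the paper. For a smooth map `φ : M → N` between
Riemannian manifolds (in global charts, with Levi-Civita Christoffel symbols `ΓM`, `ΓN`),
the second differential `Φ_* = (φ_*)_*` satisfies
`Φ_*(X^v_ξ) = (φ_* X)^v_{φ_* ξ}` and `Φ_*(X^h_ξ) = (φ_* X)^h_{φ_* ξ} + (B(X,ξ))^v_{φ_* ξ}`. -/
theorem stmt1
    (gM : E → E → E → ℝ) (gN : F → F → F → ℝ)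
    (ΓM : E → E → E → E) (ΓN : F → F → F → F)
    (hgM : IsMetric gM) (hgN : IsMetric gN)
    (hΓM : IsLeviCivita gM ΓM) (hΓN : IsLeviCivita gN ΓN)
    (φ : E → F) (hφ : ContDiff ℝ (⊤ : ℕ∞) φ)
    (x ξ X : E) :
    fderiv ℝ (tmap φ) (x, ξ) (vlift X) = vlift (fderiv ℝ φ x X) ∧
    fderiv ℝ (tmap φ) (x, ξ) (hlift ΓM x ξ X)
      = hlift ΓN (φ x) (fderiv ℝ φ x ξ) (fderiv ℝ φ x X) + vlift (sff ΓM ΓN φ x X ξ) :=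
  stmt1_general ΓM ΓN φ hφ x ξ X
end
end

section
/- Assume dim N ≥ 2 and Φ = φ_* : TM → TN is horizontally conformal with dilatation Λ, with Cheeger–Gromoll type metrics h_{p,q,α} and h_{r,s,β} on TM and TN. Then φ is horizontally conformal with constant dilatation λ = Λ(0), Λ is constant equal to λ, and the horizontal distribution H^φ is integrable. -/
open Function
open scoped BigOperators

noncomputable section

variable {E : Type*} [NormedAddCommGroup E] [NormedSpace ℝ E]
variable {F : Type*} [NormedAddCommGroup F] [NormedSpace ℝ F]

/-!
Horizontal lifts `X^h` of `φ`-horizontal vectors are `Φ`-horizontal, and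
`Φ_* (c^h + u^v) = (φ_* c)^h + (φ_* u + B(c, ξ))^v`, where `B` is the second fundamental form
of `φ`. At `ξ = 0` this makes `φ` horizontally conformal with dilatation `Λ(x, 0)`; at a general
`ξ` it gives `(Λ(x, ξ) - Λ(x, 0)) g(X, X') = ω h̃(B(X, ξ), B(X', ξ))`. Hence `Λ(x, 0) ≤ Λ(x, ξ)`,
and strict inequality would make `X ↦ B(X, ξ)` an isomorphism `H_x → T_{φ x} N`, which is
incompatible with conformality on the `Φ`-horizontal vectors with non-zero vertical part. So `Λ` is
constant on fibres and `B` vanishes as soon as one argument is horizontal. Then the horizontal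
field `U_w = φ_*ᵀ w` satisfies `φ_* U_w = λ w` with `∇^φ (φ_* U_w) = 0`, so `λ` is constant; and
`∇_X Y` is horizontal for horizontal `X, Y`, so `[X, Y] = ∇_X Y - ∇_Y X` is horizontal.
-/

namespace LinearMap.BilinForm

variable {P : Type*} [AddCommGroup P] [Module ℝ P] [FiniteDimensional ℝ P]
  {B : LinearMap.BilinForm ℝ P}

theorem exists_mem_forall_apply_eq_of_pos (hB : ∀ u, u ≠ 0 → 0 < B u u) (V : Submodule ℝ P)
    (ℓ : P →ₗ[ℝ] ℝ) : ∃ v ∈ V, ∀ a ∈ V, B v a = ℓ a := by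
  have hsep : ∀ v : V, (B.restrict V) v v = 0 → v = 0 := fun v hv => by
    by_contra hne
    exact (hB v (by simpa using hne)).ne' hv
  have hV : (B.restrict V).Nondegenerate :=
    ⟨fun v hv => hsep v (hv v), fun v hv => hsep v (hv v)⟩
  refine ⟨((B.restrict V).toDual hV).symm (ℓ ∘ₗ V.subtype), Submodule.coe_mem _, fun a ha => ?_⟩
  exact apply_toDual_symm_apply (B := B.restrict V) (ℓ ∘ₗ V.subtype) ⟨a, ha⟩

theorem exists_mem_forall_sub_apply_eq_zero_of_pos (hB : ∀ u, u ≠ 0 → 0 < B u u)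
    (V : Submodule ℝ P) (e : P) : ∃ v ∈ V, ∀ a ∈ V, B (e - v) a = 0 := by
  obtain ⟨v, hv, hve⟩ := exists_mem_forall_apply_eq_of_pos hB V (B e)
  exact ⟨v, hv, fun a ha => by rw [map_sub, LinearMap.sub_apply, hve a ha, sub_self]⟩

end LinearMap.BilinForm

namespace IsMetric

variable {P : Type*} [NormedAddCommGroup P] [NormedSpace ℝ P] {g : P → P → P → ℝ}
  (hg : IsMetric g)
include hg

theorem symm (x u v : P) : g x u v = g x v u := hg.1 x u v

theorem pos (x : P) {u : P} (hu : u ≠ 0) : 0 < g x u u := hg.2.1 x u hu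

def form (x : P) : LinearMap.BilinForm ℝ P :=
  LinearMap.mk₂ ℝ (g x) (fun u u' v => (hg.2.2.1 x v).map_add u u')
    (fun c u v => (hg.2.2.1 x v).map_smul c u)
    (fun u v v' => by simp only [hg.symm x u]; exact (hg.2.2.1 x u).map_add v v')
    (fun c u v => by simp only [hg.symm x u]; exact (hg.2.2.1 x u).map_smul c v)

@[simp] theorem form_apply (x u v : P) : hg.form x u v = g x u v := rfl

theorem zero_left (x v : P) : g x 0 v = 0 := LinearMap.map_zero₂ (hg.form x) v

theorem zero_right (x u : P) : g x u 0 = 0 := map_zero (hg.form x u)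

theorem add_left (x u u' v : P) : g x (u + u') v = g x u v + g x u' v :=
  LinearMap.map_add₂ (hg.form x) u u' v

theorem add_right (x u v v' : P) : g x u (v + v') = g x u v + g x u v' :=
  map_add (hg.form x u) v v'

theorem sub_left (x u u' v : P) : g x (u - u') v = g x u v - g x u' v :=
  LinearMap.map_sub₂ (hg.form x) u u' v

theorem sub_right (x u v v' : P) : g x u (v - v') = g x u v - g x u v' :=
  map_sub (hg.form x u) v v'

theorem smul_left (x : P) (c : ℝ) (u v : P) : g x (c • u) v = c * g x u v :=
  LinearMap.map_smul₂ (hg.form x) c u v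

theorem smul_right (x : P) (c : ℝ) (u v : P) : g x u (c • v) = c * g x u v :=
  map_smul (hg.form x u) c v

theorem self_nonneg (x u : P) : 0 ≤ g x u u := by
  rcases eq_or_ne u 0 with rfl | hu
  · rw [hg.zero_left]
  · exact (hg.pos x hu).le

theorem eq_zero_of_self_eq_zero {x u : P} (h : g x u u = 0) : u = 0 := by
  by_contra hu
  exact (hg.pos x hu).ne' h

def fibreForm (q : ℝ) (x ξ : P) : LinearMap.BilinForm ℝ P :=
  hg.form x + q • ((hg.form x).flip ξ).smulRight ((hg.form x).flip ξ)

theorem fibreForm_apply (q : ℝ) (x ξ u v : P) :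
    hg.fibreForm q x ξ u v = g x u v + q * g x u ξ * g x v ξ := by
  simp [fibreForm, mul_assoc]

theorem fibreForm_self_nonneg {q : ℝ} (hq : 0 ≤ q) (x ξ u : P) : 0 ≤ hg.fibreForm q x ξ u u := by
  rw [fibreForm_apply, mul_assoc]
  exact add_nonneg (hg.self_nonneg x u) (mul_nonneg hq (mul_self_nonneg _))

theorem fibreForm_self_pos {q : ℝ} (hq : 0 ≤ q) (x ξ : P) {u : P} (hu : u ≠ 0) :
    0 < hg.fibreForm q x ξ u u := by
  rw [fibreForm_apply, mul_assoc]
  exact add_pos_of_pos_of_nonneg (hg.pos x hu) (mul_nonneg hq (mul_self_nonneg _))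

theorem fibreForm_self_eq_zero {q : ℝ} (hq : 0 ≤ q) {x ξ u : P}
    (h : hg.fibreForm q x ξ u u = 0) : u = 0 := by
  by_contra hu
  exact (hg.fibreForm_self_pos hq x ξ hu).ne' h

theorem weight_pos {α : ℝ} (hα : 0 ≤ α) (p : ℝ) (x ξ : P) : 0 < ((1 + α * g x ξ ξ)⁻¹) ^ p :=
  Real.rpow_pos_of_pos (inv_pos.2 (by nlinarith [hg.self_nonneg x ξ])) p

variable [FiniteDimensional ℝ P]

def flat (x : P) : P →L[ℝ] StrongDual ℝ P :=
  LinearMap.toContinuousLinearMap (LinearMap.toContinuousLinearMap.toLinearMap ∘ₗ hg.form x)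

@[simp] theorem flat_apply (x u v : P) : hg.flat x u v = g x u v := rfl

theorem contDiff_flat : ContDiff ℝ (⊤ : ℕ∞) hg.flat :=
  contDiff_clm_apply_iff.2 fun u => contDiff_clm_apply_iff.2 fun v => hg.2.2.2 u v

theorem isInvertible_flat (x : P) : (hg.flat x).IsInvertible := by
  have hinj : Function.Injective (hg.flat x) := by
    rw [injective_iff_map_eq_zero]
    intro u hu
    exact hg.eq_zero_of_self_eq_zero (by simpa using congrArg (· u) hu)
  have hrank : Module.finrank ℝ P = Module.finrank ℝ (StrongDual ℝ P) := by
    rw [← LinearMap.toContinuousLinearMap.finrank_eq, Subspace.dual_finrank_eq]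
  exact ⟨(LinearMap.linearEquivOfInjective (hg.flat x : P →ₗ[ℝ] StrongDual ℝ P) hinj
    hrank).toContinuousLinearEquiv, rfl⟩

theorem apply_inverse_flat (x : P) (ℓ : StrongDual ℝ P) (v : P) :
    g x ((hg.flat x).inverse ℓ) v = ℓ v := by
  obtain ⟨e, he⟩ := hg.isInvertible_flat x
  rw [← hg.flat_apply, ← he, ContinuousLinearMap.inverse_equiv]
  simp

end IsMetric

section Lifts

variable {P : Type*} [NormedAddCommGroup P] [NormedSpace ℝ P]

theorem hlift_add_vlift_eta (Γ : P → P → P → P) (x ξ : P) (A : P × P) :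
    hlift Γ x ξ A.1 + vlift (A.2 + Γ x A.1 ξ) = A := by
  ext <;> simp [hlift, vlift]

theorem hlift_add_vlift_eq_zero_iff {Γ : P → P → P → P} (hΓ : IsChristoffel Γ) {x ξ c u : P} :
    hlift Γ x ξ c + vlift u = 0 ↔ c = 0 ∧ u = 0 := by
  simp only [hlift, vlift, Prod.mk_add_mk, add_zero, Prod.mk_eq_zero]
  constructor
  · rintro ⟨rfl, hu⟩
    rw [(hΓ.1 x ξ).map_zero, neg_zero, zero_add] at hu
    exact ⟨rfl, hu⟩
  · rintro ⟨rfl, rfl⟩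
    rw [(hΓ.1 x ξ).map_zero, neg_zero, add_zero]
    exact ⟨rfl, rfl⟩

theorem cg_hlift_add_vlift (g : P → P → P → ℝ) (Γ : P → P → P → P) (p q α : ℝ)
    (x ξ c u c' u' : P) :
    cg g Γ p q α x ξ (hlift Γ x ξ c + vlift u) (hlift Γ x ξ c' + vlift u') =
      g x c c' + ((1 + α * g x ξ ξ)⁻¹) ^ p * (g x u u' + q * g x u ξ * g x u' ξ) := by
  simp [cg, hlift, vlift]

end Lifts

section TangentMap

variable {φ : E → F}

theorem ContDiff.differentiable_fderiv (hφ : ContDiff ℝ 2 φ) : Differentiable ℝ (fderiv ℝ φ) :=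
  (hφ.fderiv_right (m := 1) (by norm_num)).differentiable one_ne_zero

theorem fderiv_fderiv_apply_field (hφ : ContDiff ℝ 2 φ) {V : E → E} {x : E}
    (hV : DifferentiableAt ℝ V x) (d : E) :
    fderiv ℝ (fun y => fderiv ℝ φ y (V y)) x d =
      fderiv ℝ (fderiv ℝ φ) x d (V x) + fderiv ℝ φ x (fderiv ℝ V x d) := by
  rw [fderiv_clm_apply (hφ.differentiable_fderiv x) hV]
  simp [add_comm]

theorem fderiv_fderiv_apply (hφ : ContDiff ℝ 2 φ) (x v d : E) :
    fderiv ℝ (fun y => fderiv ℝ φ y v) x d = fderiv ℝ (fderiv ℝ φ) x d v := by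
  simpa using fderiv_fderiv_apply_field hφ (differentiableAt_const v) d

theorem fderiv_tmap (hφ : ContDiff ℝ 2 φ) (z A : E × E) :
    fderiv ℝ (tmap φ) z A =
      (fderiv ℝ φ z.1 A.1, fderiv ℝ (fderiv ℝ φ) z.1 A.1 z.2 + fderiv ℝ φ z.1 A.2) := by
  have h1 : HasFDerivAt (fun w : E × E => φ w.1)
      ((fderiv ℝ φ z.1).comp (ContinuousLinearMap.fst ℝ E E)) z :=
    ((hφ.differentiable two_ne_zero) z.1).hasFDerivAt.comp z hasFDerivAt_fst
  have h2 :=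
    ((hφ.differentiable_fderiv z.1).hasFDerivAt.comp z hasFDerivAt_fst).clm_apply hasFDerivAt_snd
  have h : HasFDerivAt (tmap φ) _ z := h1.prodMk h2
  rw [h.fderiv]
  simp [add_comm]

end TangentMap

section SecondFundamentalForm

variable {ΓM : E → E → E → E} {ΓN : F → F → F → F} {φ : E → F}

theorem sff_eq (hφ : ContDiff ℝ 2 φ) (x X Y : E) :
    sff ΓM ΓN φ x X Y = fderiv ℝ (fderiv ℝ φ) x X Y
      + ΓN (φ x) (fderiv ℝ φ x X) (fderiv ℝ φ x Y) - fderiv ℝ φ x (ΓM x X Y) := by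
  rw [sff, fderiv_fderiv_apply hφ]

theorem sff_zero_right (hΓM : IsChristoffel ΓM) (hΓN : IsChristoffel ΓN) (x X : E) :
    sff ΓM ΓN φ x X 0 = 0 := by
  simp [sff, (hΓN.2.1 _ _).map_zero, (hΓM.2.1 _ _).map_zero]

theorem isLinearMap_sff_left (hΓM : IsChristoffel ΓM) (hΓN : IsChristoffel ΓN) (x ξ : E) :
    IsLinearMap ℝ (fun X => sff ΓM ΓN φ x X ξ) where
  map_add X X' := by
    simp only [sff, map_add, (hΓN.1 _ _).map_add, (hΓM.1 _ _).map_add]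
    abel
  map_smul c X := by
    simp only [sff, map_smul, (hΓN.1 _ _).map_smul, (hΓM.1 _ _).map_smul, smul_sub,
      smul_add]

theorem sff_symm (hφ : ContDiff ℝ 2 φ) (hΓM : ∀ x u v, ΓM x u v = ΓM x v u)
    (hΓN : ∀ y u v, ΓN y u v = ΓN y v u) (x X Y : E) :
    sff ΓM ΓN φ x X Y = sff ΓM ΓN φ x Y X := by
  rw [sff_eq hφ, sff_eq hφ, (hφ.contDiffAt.isSymmSndFDerivAt (by simp)).eq, hΓM, hΓN]

theorem fderiv_tmap_hlift_add_vlift (hφ : ContDiff ℝ 2 φ) (x ξ c u : E) :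
    fderiv ℝ (tmap φ) (x, ξ) (hlift ΓM x ξ c + vlift u) =
      hlift ΓN (φ x) (fderiv ℝ φ x ξ) (fderiv ℝ φ x c)
        + vlift (fderiv ℝ φ x u + sff ΓM ΓN φ x c ξ) := by
  rw [fderiv_tmap hφ, sff_eq hφ]
  ext <;> simp [hlift, vlift]
  abel

end SecondFundamentalForm

section Horizontal

variable {gM : E → E → E → ℝ} {gN : F → F → F → ℝ} {φ : E → F}

def horizontal (hg : IsMetric gM) (φ : E → F) (x : E) : Submodule ℝ E where
  carrier := Hor gM φ x
  add_mem' {X Y} hX hY Z hZ := by rw [hg.add_left, hX Z hZ, hY Z hZ, add_zero]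
  zero_mem' Z _ := hg.zero_left x Z
  smul_mem' c X hX Z hZ := by
    show gM x (c • X) Z = 0
    rw [hg.smul_left, hX Z hZ, mul_zero]

theorem eq_zero_of_mem_hor (hg : IsMetric gM) {x X : E} (hX : X ∈ Hor gM φ x)
    (h : fderiv ℝ φ x X = 0) : X = 0 :=
  hg.eq_zero_of_self_eq_zero (hX X h)

variable [FiniteDimensional ℝ E]

theorem exists_sub_mem_hor (hg : IsMetric gM) (x e : E) :
    ∃ v, fderiv ℝ φ x v = 0 ∧ e - v ∈ Hor gM φ x := by
  obtain ⟨v, hv, horth⟩ := LinearMap.BilinForm.exists_mem_forall_sub_apply_eq_zero_of_pos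
    (B := hg.form x) (fun u hu => hg.pos x hu) (LinearMap.ker (fderiv ℝ φ x : E →ₗ[ℝ] F)) e
  exact ⟨v, hv, fun Z hZ => horth Z hZ⟩

theorem exists_mem_hor_fderiv_eq (hg : IsMetric gM) {x : E}
    (hsurj : Function.Surjective (fderiv ℝ φ x)) (w : F) :
    ∃ X ∈ Hor gM φ x, fderiv ℝ φ x X = w := by
  obtain ⟨e, rfl⟩ := hsurj w
  obtain ⟨v, hv, hor⟩ := exists_sub_mem_hor (φ := φ) hg x e
  exact ⟨e - v, hor, by rw [map_sub, hv, sub_zero]⟩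

theorem finrank_horizontal [FiniteDimensional ℝ F] (hg : IsMetric gM) {x : E}
    (hsurj : Function.Surjective (fderiv ℝ φ x)) :
    Module.finrank ℝ (horizontal hg φ x) = Module.finrank ℝ F := by
  refine (LinearEquiv.ofBijective ((fderiv ℝ φ x : E →ₗ[ℝ] F) ∘ₗ (horizontal hg φ x).subtype)
    ⟨?_, ?_⟩).finrank_eq
  · rw [← LinearMap.ker_eq_bot, Submodule.eq_bot_iff]
    exact fun X hX => Subtype.ext (eq_zero_of_mem_hor hg X.2 hX)
  · intro w
    obtain ⟨X, hX, hXw⟩ := exists_mem_hor_fderiv_eq hg hsurj w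
    exact ⟨⟨X, hX⟩, hXw⟩

end Horizontal

def HorConfAt (gM : E → E → E → ℝ) (gN : F → F → F → ℝ) (φ : E → F) (x : E) (lam : ℝ) :
    Prop :=
  ∀ X ∈ Hor gM φ x, ∀ Y ∈ Hor gM φ x,
    gN (φ x) (fderiv ℝ φ x X) (fderiv ℝ φ x Y) = lam * gM x X Y

theorem HorConfAt.apply_right [FiniteDimensional ℝ E] {gM : E → E → E → ℝ}
    {gN : F → F → F → ℝ} {φ : E → F} {x : E} {lam : ℝ} (h : HorConfAt gM gN φ x lam)
    (hgM : IsMetric gM) {X : E} (hX : X ∈ Hor gM φ x) (v : E) :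
    gN (φ x) (fderiv ℝ φ x X) (fderiv ℝ φ x v) = lam * gM x X v := by
  obtain ⟨v', hv', hor⟩ := exists_sub_mem_hor (φ := φ) hgM x v
  have hX' : gM x X v' = 0 := hX v' hv'
  rw [← sub_add_cancel v v', map_add, hv', add_zero, h X hX _ hor, hgM.add_right, hX', add_zero]

section HorizontalLift

variable {gM : E → E → E → ℝ} {gN : F → F → F → ℝ} {ΓM : E → E → E → E}
  {ΓN : F → F → F → F} {φ : E → F} {p q α r s β : ℝ}

theorem fderiv_tmap_hlift_add_vlift_eq_zero_iff (hφ : ContDiff ℝ 2 φ) (hΓN : IsChristoffel ΓN)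
    {x ξ c u : E} :
    fderiv ℝ (tmap φ) (x, ξ) (hlift ΓM x ξ c + vlift u) = 0 ↔
      fderiv ℝ φ x c = 0 ∧ fderiv ℝ φ x u + sff ΓM ΓN φ x c ξ = 0 := by
  rw [fderiv_tmap_hlift_add_vlift hφ, hlift_add_vlift_eq_zero_iff hΓN]

theorem hlift_add_vlift_mem_horT_iff (hφ : ContDiff ℝ 2 φ) (hgM : IsMetric gM)
    (hΓN : IsChristoffel ΓN) {x ξ c u : E} :
    hlift ΓM x ξ c + vlift u ∈ HorT gM ΓM p q α φ (x, ξ) ↔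
      ∀ c' u', fderiv ℝ φ x c' = 0 → fderiv ℝ φ x u' + sff ΓM ΓN φ x c' ξ = 0 →
        gM x c c' + ((1 + α * gM x ξ ξ)⁻¹) ^ p * hgM.fibreForm q x ξ u u' = 0 := by
  simp only [IsMetric.fibreForm_apply]
  constructor
  · intro h c' u' hc' hu'
    rw [← cg_hlift_add_vlift]
    exact h _ ((fderiv_tmap_hlift_add_vlift_eq_zero_iff hφ hΓN).2 ⟨hc', hu'⟩)
  · intro h A hA
    rw [← hlift_add_vlift_eta ΓM x ξ A] at hA ⊢
    obtain ⟨hc', hu'⟩ := (fderiv_tmap_hlift_add_vlift_eq_zero_iff hφ hΓN).1 hA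
    rw [cg_hlift_add_vlift]
    exact h _ _ hc' hu'

theorem hlift_mem_horT (hφ : ContDiff ℝ 2 φ) (hgM : IsMetric gM) (hΓN : IsChristoffel ΓN)
    {x ξ X : E} (hX : X ∈ Hor gM φ x) :
    hlift ΓM x ξ X + vlift 0 ∈ HorT gM ΓM p q α φ (x, ξ) :=
  (hlift_add_vlift_mem_horT_iff hφ hgM hΓN).2 fun c' _ hc' _ => by
    simp [hX c' hc']

theorem exists_hlift_add_vlift_mem_horT (hφ : ContDiff ℝ 2 φ) (hgM : IsMetric gM)
    (hΓM : IsChristoffel ΓM) (hΓN : IsChristoffel ΓN) [FiniteDimensional ℝ E] {x ξ u : E}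
    (hsurj : Function.Surjective (fderiv ℝ φ x))
    (hu : ∀ a, fderiv ℝ φ x a = 0 → hgM.fibreForm q x ξ u a = 0) :
    ∃ c, fderiv ℝ φ x c = 0 ∧ hlift ΓM x ξ c + vlift u ∈ HorT gM ΓM p q α φ (x, ξ) := by
  obtain ⟨L, hL⟩ := (fderiv ℝ φ x : E →ₗ[ℝ] F).exists_rightInverse_of_surjective
    (LinearMap.range_eq_top.2 hsurj)
  set ω := ((1 + α * gM x ξ ξ)⁻¹) ^ p
  let ℓ : E →ₗ[ℝ] ℝ :=
    ω • (hgM.fibreForm q x ξ u ∘ₗ L ∘ₗ (isLinearMap_sff_left (φ := φ) hΓM hΓN x ξ).mk')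
  obtain ⟨c, hc, hcℓ⟩ := LinearMap.BilinForm.exists_mem_forall_apply_eq_of_pos
    (B := hgM.form x) (fun _ hv => hgM.pos x hv) (LinearMap.ker (fderiv ℝ φ x : E →ₗ[ℝ] F)) ℓ
  refine ⟨c, hc, (hlift_add_vlift_mem_horT_iff hφ hgM hΓN).2 fun c' u' hc' hu' => ?_⟩
  have hLc' : fderiv ℝ φ x (L (sff ΓM ΓN φ x c' ξ)) = sff ΓM ΓN φ x c' ξ :=
    LinearMap.congr_fun hL _
  have hvert := hu _ (show fderiv ℝ φ x (u' + L (sff ΓM ΓN φ x c' ξ)) = 0 by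
    rw [map_add, hLc', hu'])
  have hcc' : gM x c c' = ω * hgM.fibreForm q x ξ u (L (sff ΓM ΓN φ x c' ξ)) := hcℓ c' hc'
  rw [map_add] at hvert
  linear_combination hcc' + ω * hvert

theorem HCSubT.apply_hlift_add_vlift {Lam : E × E → ℝ}
    (hHCT : HCSubT gM ΓM p q α gN ΓN r s β φ Lam) (hφ : ContDiff ℝ 2 φ) (hgM : IsMetric gM)
    (hgN : IsMetric gN) {x ξ c u c' u' : E}
    (h : hlift ΓM x ξ c + vlift u ∈ HorT gM ΓM p q α φ (x, ξ))
    (h' : hlift ΓM x ξ c' + vlift u' ∈ HorT gM ΓM p q α φ (x, ξ)) :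
    gN (φ x) (fderiv ℝ φ x c) (fderiv ℝ φ x c')
        + ((1 + β * gN (φ x) (fderiv ℝ φ x ξ) (fderiv ℝ φ x ξ))⁻¹) ^ r *
          hgN.fibreForm s (φ x) (fderiv ℝ φ x ξ) (fderiv ℝ φ x u + sff ΓM ΓN φ x c ξ)
            (fderiv ℝ φ x u' + sff ΓM ΓN φ x c' ξ)
      = Lam (x, ξ) * (gM x c c' + ((1 + α * gM x ξ ξ)⁻¹) ^ p * hgM.fibreForm q x ξ u u') := by
  have := hHCT.2.2 (x, ξ) _ h _ h'
  rwa [fderiv_tmap_hlift_add_vlift hφ, fderiv_tmap_hlift_add_vlift hφ, cg_hlift_add_vlift,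
    cg_hlift_add_vlift, ← hgM.fibreForm_apply, ← hgN.fibreForm_apply] at this

end HorizontalLift

namespace HCSubT

variable {gM : E → E → E → ℝ} {gN : F → F → F → ℝ} {ΓM : E → E → E → E}
  {ΓN : F → F → F → F} {φ : E → F} {p q α r s β : ℝ} {Lam : E × E → ℝ}
  (hHCT : HCSubT gM ΓM p q α gN ΓN r s β φ Lam) (hφ : ContDiff ℝ 2 φ)
  (hgM : IsMetric gM) (hgN : IsMetric gN) (hΓM : IsChristoffel ΓM) (hΓN : IsChristoffel ΓN)
include hHCT hφ hgM hgN hΓM hΓN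

theorem horConfAt (x : E) : HorConfAt gM gN φ x (Lam (x, 0)) := by
  intro X hX Y hY
  simpa [sff_zero_right hΓM hΓN] using hHCT.apply_hlift_add_vlift hφ hgM hgN
    (hlift_mem_horT (ξ := 0) hφ hgM hΓN hX) (hlift_mem_horT hφ hgM hΓN hY)

theorem apply_hlift {x ξ X X' : E} (hX : X ∈ Hor gM φ x)
    (hX' : X' ∈ Hor gM φ x) :
    Lam (x, 0) * gM x X X'
        + ((1 + β * gN (φ x) (fderiv ℝ φ x ξ) (fderiv ℝ φ x ξ))⁻¹) ^ r *
          hgN.fibreForm s (φ x) (fderiv ℝ φ x ξ) (sff ΓM ΓN φ x X ξ) (sff ΓM ΓN φ x X' ξ)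
      = Lam (x, ξ) * gM x X X' := by
  have h := hHCT.apply_hlift_add_vlift hφ hgM hgN (hlift_mem_horT (ξ := ξ) hφ hgM hΓN hX)
    (hlift_mem_horT hφ hgM hΓN hX')
  rw [hHCT.horConfAt hφ hgM hgN hΓM hΓN x X hX X' hX'] at h
  simpa using h

theorem dilatation_zero_le [FiniteDimensional ℝ E] [Nontrivial F] (hβ : 0 ≤ β) (hs : 0 ≤ s) {x : E}
    (hsurj : Function.Surjective (fderiv ℝ φ x)) (ξ : E) : Lam (x, 0) ≤ Lam (x, ξ) := by
  obtain ⟨w, hw⟩ := exists_ne (0 : F)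
  obtain ⟨X, hX, rfl⟩ := exists_mem_hor_fderiv_eq hgM hsurj w
  have hX0 : 0 < gM x X X := hgM.pos x (by rintro rfl; simp at hw)
  have h := hHCT.apply_hlift hφ hgM hgN hΓM hΓN (ξ := ξ) hX hX
  by_contra! hlt
  nlinarith [mul_pos (sub_pos.2 hlt) hX0, mul_nonneg (hgN.weight_pos hβ r (φ x) (fderiv ℝ φ x ξ)).le
    (hgN.fibreForm_self_nonneg hs (φ x) (fderiv ℝ φ x ξ) (sff ΓM ΓN φ x X ξ))]

theorem exists_mem_hor_sff_eq_of_lt [FiniteDimensional ℝ E] [FiniteDimensional ℝ F] {x ξ : E}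
    (hsurj : Function.Surjective (fderiv ℝ φ x)) (hlt : Lam (x, 0) < Lam (x, ξ)) (T : F) :
    ∃ X ∈ Hor gM φ x, sff ΓM ΓN φ x X ξ = T := by
  let σ : horizontal hgM φ x →ₗ[ℝ] F :=
    (isLinearMap_sff_left (φ := φ) hΓM hΓN x ξ).mk' ∘ₗ (horizontal hgM φ x).subtype
  have hσ : Function.Injective σ := by
    rw [← LinearMap.ker_eq_bot, Submodule.eq_bot_iff]
    intro X (hX : sff ΓM ΓN φ x X ξ = 0)
    have h := hHCT.apply_hlift hφ hgM hgN hΓM hΓN (ξ := ξ) X.2 X.2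
    rw [hX, map_zero, mul_zero, add_zero] at h
    have hXX : (Lam (x, ξ) - Lam (x, 0)) * gM x X X = 0 := by linear_combination -h
    exact Subtype.ext (hgM.eq_zero_of_self_eq_zero
      ((mul_eq_zero.1 hXX).resolve_left (sub_ne_zero.2 hlt.ne')))
  obtain ⟨X, hX⟩ :=
    (LinearMap.injective_iff_surjective_of_finrank_eq_finrank (finrank_horizontal hgM hsurj)).1
      hσ T
  exact ⟨X, X.2, hX⟩

theorem not_dilatation_zero_lt [FiniteDimensional ℝ E] [FiniteDimensional ℝ F] [Nontrivial F]
    (hq : 0 ≤ q) (hα : 0 ≤ α) {x : E} (hsurj : Function.Surjective (fderiv ℝ φ x)) (ξ : E) :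
    ¬ Lam (x, 0) < Lam (x, ξ) := by
  intro hlt
  obtain ⟨w, hw⟩ := exists_ne (0 : F)
  obtain ⟨e, rfl⟩ := hsurj w
  obtain ⟨v, hv, hu⟩ := LinearMap.BilinForm.exists_mem_forall_sub_apply_eq_zero_of_pos
    (B := hgM.fibreForm q x ξ) (fun _ h => hgM.fibreForm_self_pos hq x ξ h)
    (LinearMap.ker (fderiv ℝ φ x : E →ₗ[ℝ] F)) e
  have hu0 : e - v ≠ 0 := fun h => hw (by rwa [sub_eq_zero.1 h])
  obtain ⟨c, hc, hA⟩ :=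
    exists_hlift_add_vlift_mem_horT hφ hgM hΓM hΓN hsurj fun a ha => hu a ha
  obtain ⟨X, hX, hXT⟩ := hHCT.exists_mem_hor_sff_eq_of_lt hφ hgM hgN hΓM hΓN hsurj hlt
    (fderiv ℝ φ x (e - v) + sff ΓM ΓN φ x c ξ)
  -- `A = c^h + (e - v)^v` and `X^h` are `Φ`-horizontal and `h`-orthogonal, yet `Φ_* A = T^v` is
  -- the vertical part of `Φ_* X^h`, so `h(Φ_* A, Φ_* A) = Λ h(A, X^h) = 0 < Λ h(A, A)`.
  have hAX := hHCT.apply_hlift_add_vlift hφ hgM hgN hA (hlift_mem_horT hφ hgM hΓN hX)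
  have hAA := hHCT.apply_hlift_add_vlift hφ hgM hgN hA hA
  rw [hc, map_zero, zero_add, hXT, hgM.symm, hX c hc, hgN.zero_left] at hAX
  rw [hc, hgN.zero_left] at hAA
  simp only [map_zero, mul_zero, add_zero, zero_add] at hAX
  have hpos : 0 < gM x c c + ((1 + α * gM x ξ ξ)⁻¹) ^ p * hgM.fibreForm q x ξ (e - v) (e - v) :=
    add_pos_of_nonneg_of_pos (hgM.self_nonneg x c)
      (mul_pos (hgM.weight_pos hα p x ξ) (hgM.fibreForm_self_pos hq x ξ hu0))
  have := mul_pos (hHCT.2.1 (x, ξ)) hpos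
  linarith

theorem dilatation_eq [FiniteDimensional ℝ E] [FiniteDimensional ℝ F] [Nontrivial F]
    (hq : 0 ≤ q) (hs : 0 ≤ s) (hα : 0 ≤ α) (hβ : 0 ≤ β) {x : E}
    (hsurj : Function.Surjective (fderiv ℝ φ x)) (ξ : E) : Lam (x, ξ) = Lam (x, 0) :=
  le_antisymm (not_lt.1 (hHCT.not_dilatation_zero_lt hφ hgM hgN hΓM hΓN hq hα hsurj ξ))
    (hHCT.dilatation_zero_le hφ hgM hgN hΓM hΓN hβ hs hsurj ξ)

theorem sff_eq_zero_of_mem_hor [FiniteDimensional ℝ E] [FiniteDimensional ℝ F] [Nontrivial F]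
    (hq : 0 ≤ q) (hs : 0 ≤ s) (hα : 0 ≤ α) (hβ : 0 ≤ β) {x : E}
    (hsurj : Function.Surjective (fderiv ℝ φ x)) (ξ : E) {X : E} (hX : X ∈ Hor gM φ x) :
    sff ΓM ΓN φ x X ξ = 0 := by
  have h := hHCT.apply_hlift hφ hgM hgN hΓM hΓN (ξ := ξ) hX hX
  rw [hHCT.dilatation_eq hφ hgM hgN hΓM hΓN hq hs hα hβ hsurj ξ, add_eq_left] at h
  exact hgN.fibreForm_self_eq_zero hs
    ((mul_eq_zero.1 h).resolve_left (hgN.weight_pos hβ r (φ x) (fderiv ℝ φ x ξ)).ne')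

end HCSubT

def covDeriv {P : Type*} [NormedAddCommGroup P] [NormedSpace ℝ P] (Γ : P → P → P → P)
    (W : P → P) (x d : P) : P :=
  fderiv ℝ W x d + Γ x d (W x)

theorem covDeriv_sub_covDeriv {P : Type*} [NormedAddCommGroup P] [NormedSpace ℝ P]
    {Γ : P → P → P → P} (hΓ : ∀ x u v, Γ x u v = Γ x v u) (X Y : P → P) (x : P) :
    covDeriv Γ Y x (X x) - covDeriv Γ X x (Y x) = fderiv ℝ Y x (X x) - fderiv ℝ X x (Y x) := by
  rw [covDeriv, covDeriv, hΓ x (Y x), add_sub_add_right_eq_sub]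

section LeviCivita

variable {P : Type*} [NormedAddCommGroup P] [NormedSpace ℝ P] [FiniteDimensional ℝ P]
  {g : P → P → P → ℝ} {c A B : E → P} {x : E}

theorem IsMetric.differentiableAt_comp (hg : IsMetric g) (hc : DifferentiableAt ℝ c x)
    (hA : DifferentiableAt ℝ A x) (hB : DifferentiableAt ℝ B x) :
    DifferentiableAt ℝ (fun y => g (c y) (A y) (B y)) x :=
  ((((hg.contDiff_flat.differentiable (by simp)) (c x)).comp x hc).clm_apply hA).clm_apply hB

theorem IsLeviCivita.fderiv_comp_apply {Γ : P → P → P → P} (hg : IsMetric g)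
    (hΓ : IsLeviCivita g Γ) (hc : DifferentiableAt ℝ c x) (hA : DifferentiableAt ℝ A x)
    (hB : DifferentiableAt ℝ B x) (d : E) :
    fderiv ℝ (fun y => g (c y) (A y) (B y)) x d =
      g (c x) (fderiv ℝ A x d + Γ (c x) (fderiv ℝ c x d) (A x)) (B x)
        + g (c x) (A x) (fderiv ℝ B x d + Γ (c x) (fderiv ℝ c x d) (B x)) := by
  have hflat := hg.contDiff_flat.differentiable (by simp)
  have hmetric : ∀ z u v w, fderiv ℝ hg.flat z w u v = fderiv ℝ (fun p => g p u v) z w := by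
    intro z u v w
    change _ = fderiv ℝ (fun p => hg.flat p u v) z w
    rw [fderiv_clm_apply ((hflat z).clm_apply (differentiableAt_const u))
      (differentiableAt_const v), fderiv_clm_apply (hflat z) (differentiableAt_const u)]
    simp
  have hfc : DifferentiableAt ℝ (fun y => hg.flat (c y)) x := (hflat (c x)).comp x hc
  change fderiv ℝ (fun y => hg.flat (c y) (A y) (B y)) x d = _
  rw [fderiv_clm_apply (hfc.clm_apply hA) hB, fderiv_clm_apply hfc hA,
    fderiv_fun_comp x (hflat (c x)) hc]
  simp only [add_apply, ContinuousLinearMap.coe_comp, Function.comp_apply,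
    ContinuousLinearMap.flip_apply, hmetric, hΓ.2.2, IsMetric.flat_apply, hg.add_left,
    hg.add_right]
  ring

end LeviCivita

section Adjoint

variable [FiniteDimensional ℝ E] [FiniteDimensional ℝ F] {gM : E → E → E → ℝ}
  {gN : F → F → F → ℝ} {φ : E → F}

def fderivAdjoint (hgM : IsMetric gM) (hgN : IsMetric gN) (φ : E → F) (y : E) (w : F) : E :=
  (hgM.flat y).inverse ((hgN.flat (φ y) w).comp (fderiv ℝ φ y))

variable (hgM : IsMetric gM) (hgN : IsMetric gN)
include hgM hgN

theorem apply_fderivAdjoint (y : E) (w : F) (v : E) :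
    gM y (fderivAdjoint hgM hgN φ y w) v = gN (φ y) w (fderiv ℝ φ y v) :=
  hgM.apply_inverse_flat y _ v

theorem fderivAdjoint_mem_hor (y : E) (w : F) : fderivAdjoint hgM hgN φ y w ∈ Hor gM φ y :=
  fun Z hZ => by rw [apply_fderivAdjoint hgM hgN, hZ, hgN.zero_right]

theorem fderiv_fderivAdjoint {y : E} {lam : ℝ} (hsurj : Function.Surjective (fderiv ℝ φ y))
    (hconf : HorConfAt gM gN φ y lam) (w : F) :
    fderiv ℝ φ y (fderivAdjoint hgM hgN φ y w) = lam • w := by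
  obtain ⟨v, hv⟩ := hsurj (fderiv ℝ φ y (fderivAdjoint hgM hgN φ y w) - lam • w)
  have h :
      gN (φ y) (fderiv ℝ φ y (fderivAdjoint hgM hgN φ y w) - lam • w) (fderiv ℝ φ y v) = 0 := by
    rw [hgN.sub_left, hgN.smul_left, hconf.apply_right hgM (fderivAdjoint_mem_hor hgM hgN y w),
      apply_fderivAdjoint hgM hgN, sub_self]
  rw [hv] at h
  exact sub_eq_zero.1 (hgN.eq_zero_of_self_eq_zero h)

theorem differentiable_fderivAdjoint (hφ : ContDiff ℝ 2 φ) (w : F) :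
    Differentiable ℝ fun y => fderivAdjoint hgM hgN φ y w := by
  intro y
  have hinv : DifferentiableAt ℝ (fun y => (hgM.flat y).inverse) y :=
    ((hgM.isInvertible_flat y).contDiffAt_map_inverse.comp y
      hgM.contDiff_flat.contDiffAt).differentiableAt (by simp)
  have hflat : DifferentiableAt ℝ (fun y => hgN.flat (φ y)) y :=
    (hgN.contDiff_flat.differentiable (by simp) (φ y)).comp y
      (hφ.differentiable two_ne_zero y)
  exact hinv.clm_apply ((hflat.clm_apply (differentiableAt_const w)).clm_comp
    (hφ.differentiable_fderiv y))

end Adjoint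

section VanishingSecondFundamentalForm

variable [FiniteDimensional ℝ E] [FiniteDimensional ℝ F] {gM : E → E → E → ℝ}
  {gN : F → F → F → ℝ} {ΓM : E → E → E → E} {ΓN : F → F → F → F} {φ : E → F}
  (hgM : IsMetric gM) (hgN : IsMetric gN) (hΓM : IsLeviCivita gM ΓM)
  (hΓN : IsLeviCivita gN ΓN) (hφ : ContDiff ℝ 2 φ)
include hgM hgN hΓM hΓN hφ

theorem apply_covDeriv_fderivAdjoint (x d : E) (w : F) (v : E) :
    gM x (covDeriv ΓM (fun y => fderivAdjoint hgM hgN φ y w) x d) v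
      = gN (φ x) (ΓN (φ x) (fderiv ℝ φ x d) w) (fderiv ℝ φ x v)
        + gN (φ x) w (sff ΓM ΓN φ x d v) := by
  have hfun : (fun y => gM y (fderivAdjoint hgM hgN φ y w) v)
      = fun y => gN (φ y) w (fderiv ℝ φ y v) :=
    funext fun y => apply_fderivAdjoint hgM hgN y w v
  have h := congrArg (fun f => fderiv ℝ f x d) hfun
  rw [hΓM.fderiv_comp_apply hgM differentiableAt_fun_id
      (differentiable_fderivAdjoint hgM hgN hφ w x) (differentiableAt_const v),
    hΓN.fderiv_comp_apply hgN (hφ.differentiable two_ne_zero x) (differentiableAt_const w)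
      ((hφ.differentiable_fderiv x).clm_apply (differentiableAt_const v))] at h
  simp only [fderiv_fun_id, fderiv_const_apply, ContinuousLinearMap.id_apply, zero_apply,
    zero_add, apply_fderivAdjoint hgM hgN] at h
  rw [hgN.add_right] at h
  rw [covDeriv, sff, hgN.sub_right, hgN.add_right]
  linarith

theorem fderiv_fderiv_apply_fderivAdjoint_eq_zero {lam : E → ℝ}
    (hsurj : ∀ y, Function.Surjective (fderiv ℝ φ y)) (hconf : ∀ y, HorConfAt gM gN φ y (lam y))
    (hB : ∀ y X ξ, X ∈ Hor gM φ y → sff ΓM ΓN φ y X ξ = 0) (w : F) (x : E) :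
    fderiv ℝ (fun y => fderiv ℝ φ y (fderivAdjoint hgM hgN φ y w)) x = 0 := by
  ext d
  set U := fun y => fderivAdjoint hgM hgN φ y w
  set U' := fderivAdjoint hgM hgN φ x
  have hBU : sff ΓM ΓN φ x d (U x) = 0 := by
    rw [sff_symm hφ hΓM.2.1 hΓN.2.1]
    exact hB x _ d (fderivAdjoint_mem_hor hgM hgN x w)
  rw [sff_eq hφ, fderiv_fderivAdjoint hgM hgN (hsurj x) (hconf x), (hΓN.1.2.1 _ _).map_smul,
    sub_eq_zero, ← eq_sub_iff_add_eq] at hBU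
  rw [fderiv_fderiv_apply_field hφ (differentiable_fderivAdjoint hgM hgN hφ w x), hBU,
    zero_apply]
  suffices key : ∀ w', gN (φ x) (fderiv ℝ φ x (ΓM x d (U x))
      - lam x • ΓN (φ x) (fderiv ℝ φ x d) w + fderiv ℝ φ x (fderiv ℝ U x d)) w' = 0 from
    hgN.eq_zero_of_self_eq_zero (key _)
  intro w'
  calc _ = gN (φ x) (fderiv ℝ φ x (covDeriv ΓM U x d)) w'
          - lam x * gN (φ x) (ΓN (φ x) (fderiv ℝ φ x d) w) w' := by
        rw [covDeriv, map_add, hgN.add_left, hgN.add_left, hgN.sub_left, hgN.smul_left]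
        ring
    _ = gM x (covDeriv ΓM U x d) (U' w')
          - lam x * gN (φ x) (ΓN (φ x) (fderiv ℝ φ x d) w) w' := by
        rw [hgM.symm, apply_fderivAdjoint hgM hgN, hgN.symm]
    _ = 0 := by
        rw [apply_covDeriv_fderivAdjoint hgM hgN hΓM hΓN hφ,
          fderiv_fderivAdjoint hgM hgN (hsurj x) (hconf x), hgN.smul_right,
          sff_symm hφ hΓM.2.1 hΓN.2.1, hB x _ d (fderivAdjoint_mem_hor hgM hgN x w'),
          hgN.zero_right]
        ring

theorem dilatation_eq_of_sff_eq_zero [Nontrivial F] {lam : E → ℝ}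
    (hsurj : ∀ y, Function.Surjective (fderiv ℝ φ y)) (hconf : ∀ y, HorConfAt gM gN φ y (lam y))
    (hB : ∀ y X ξ, X ∈ Hor gM φ y → sff ΓM ΓN φ y X ξ = 0) (x y : E) : lam x = lam y := by
  obtain ⟨w, hw⟩ := exists_ne (0 : F)
  have hdiff : Differentiable ℝ fun y => fderiv ℝ φ y (fderivAdjoint hgM hgN φ y w) := fun y =>
    (hφ.differentiable_fderiv y).clm_apply (differentiable_fderivAdjoint hgM hgN hφ w y)
  have h := is_const_of_fderiv_eq_zero hdiff
    (fderiv_fderiv_apply_fderivAdjoint_eq_zero hgM hgN hΓM hΓN hφ hsurj hconf hB w) x y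
  rw [fderiv_fderivAdjoint hgM hgN (hsurj x) (hconf x),
    fderiv_fderivAdjoint hgM hgN (hsurj y) (hconf y)] at h
  exact smul_left_injective ℝ hw h

theorem covDeriv_mem_hor {lam : ℝ} (hlam : lam ≠ 0)
    (hconf : ∀ y, HorConfAt gM gN φ y lam) (hB : ∀ y X ξ, X ∈ Hor gM φ y → sff ΓM ΓN φ y X ξ = 0)
    {W : E → E} {x d : E} (hW : DifferentiableAt ℝ W x) (hWh : ∀ y, W y ∈ Hor gM φ y)
    (hd : d ∈ Hor gM φ x) : covDeriv ΓM W x d ∈ Hor gM φ x := by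
  intro Z hZ
  rw [covDeriv]
  have hfun : (fun y => gN (φ y) (fderiv ℝ φ y (W y)) (fderiv ℝ φ y Z))
      = fun y => lam * gM y (W y) Z :=
    funext fun y => (hconf y).apply_right hgM (hWh y) Z
  have h := congrArg (fun f => fderiv ℝ f x d) hfun
  have hφ' := hφ.differentiable_fderiv x
  rw [fderiv_const_mul (hgM.differentiableAt_comp differentiableAt_fun_id hW
      (differentiableAt_const Z)), smul_apply,
    hΓM.fderiv_comp_apply hgM differentiableAt_fun_id hW (differentiableAt_const Z),
    hΓN.fderiv_comp_apply hgN (hφ.differentiable two_ne_zero x) (hφ'.clm_apply hW)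
      (hφ'.clm_apply (differentiableAt_const Z))] at h
  simp only [fderiv_fun_id, fderiv_const_apply, ContinuousLinearMap.id_apply, zero_apply,
    zero_add, hZ, hgN.zero_right, (hΓN.1.2.1 _ _).map_zero, add_zero] at h
  have hDZ : fderiv ℝ (fun y => fderiv ℝ φ y Z) x d = fderiv ℝ φ x (ΓM x d Z) := by
    have h0 := hB x d Z hd
    rwa [sff, hZ, (hΓN.1.2.1 _ _).map_zero, add_zero, sub_eq_zero] at h0
  rw [hDZ, (hconf x).apply_right hgM (hWh x), smul_eq_mul] at h
  exact (mul_eq_zero.1 (by linear_combination -h)).resolve_left hlam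

theorem fderiv_sub_fderiv_mem_hor {lam : ℝ} (hlam : lam ≠ 0)
    (hconf : ∀ y, HorConfAt gM gN φ y lam) (hB : ∀ y X ξ, X ∈ Hor gM φ y → sff ΓM ΓN φ y X ξ = 0)
    {X Y : E → E} {x : E} (hX : DifferentiableAt ℝ X x) (hY : DifferentiableAt ℝ Y x)
    (hXh : ∀ y, X y ∈ Hor gM φ y) (hYh : ∀ y, Y y ∈ Hor gM φ y) :
    fderiv ℝ Y x (X x) - fderiv ℝ X x (Y x) ∈ Hor gM φ x := by
  rw [← covDeriv_sub_covDeriv hΓM.2.1]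
  exact (horizontal hgM φ x).sub_mem
    (covDeriv_mem_hor hgM hgN hΓM hΓN hφ hlam hconf hB hY hYh (hXh x))
    (covDeriv_mem_hor hgM hgN hΓM hΓN hφ hlam hconf hB hX hXh (hYh x))

end VanishingSecondFundamentalForm

theorem stmt14_general
    (gM : E → E → E → ℝ) (gN : F → F → F → ℝ)
    (ΓM : E → E → E → E) (ΓN : F → F → F → F)
    (hgM : IsMetric gM) (hgN : IsMetric gN)
    (hΓM : IsLeviCivita gM ΓM) (hΓN : IsLeviCivita gN ΓN)
    (φ : E → F) (hφ : ContDiff ℝ (⊤ : ℕ∞) φ)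
    (hsub : ∀ y, Surjective (fderiv ℝ φ y))
    [FiniteDimensional ℝ E] [FiniteDimensional ℝ F]
    (hdimN : 2 ≤ Module.finrank ℝ F)
    (p q α r s β : ℝ) (hq : 0 ≤ q) (hs : 0 ≤ s) (hα : 0 < α) (hβ : 0 < β)
    (Lam : E × E → ℝ)
    (hHCT : HCSubT gM ΓM p q α gN ΓN r s β φ Lam) :
    ∃ lam : ℝ,
      (∀ x : E, Lam (x, 0) = lam) ∧
      HCSub gM gN φ (fun _ => lam) ∧
      (∀ z : E × E, Lam z = lam) ∧
      (∀ (X Y : E → E), Differentiable ℝ X → Differentiable ℝ Y →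
        (∀ y, X y ∈ Hor gM φ y) → (∀ y, Y y ∈ Hor gM φ y) →
        ∀ x, (fderiv ℝ Y x (X x) - fderiv ℝ X x (Y x)) ∈ Hor gM φ x) := by
  have : Nontrivial F := Module.nontrivial_of_finrank_pos (R := ℝ) (by omega)
  have hφ2 : ContDiff ℝ 2 φ := hφ.of_le (WithTop.coe_le_coe.2 le_top)
  have hconf := hHCT.horConfAt hφ2 hgM hgN hΓM.1 hΓN.1
  have hfibre : ∀ x ξ, Lam (x, ξ) = Lam (x, 0) := fun x =>
    hHCT.dilatation_eq hφ2 hgM hgN hΓM.1 hΓN.1 hq hs hα.le hβ.le (hsub x)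
  have hB : ∀ y X ξ, X ∈ Hor gM φ y → sff ΓM ΓN φ y X ξ = 0 := fun y _ ξ hX =>
    hHCT.sff_eq_zero_of_mem_hor hφ2 hgM hgN hΓM.1 hΓN.1 hq hs hα.le hβ.le (hsub y) ξ hX
  have hbase : ∀ x, Lam (x, 0) = Lam (0, 0) := fun x =>
    dilatation_eq_of_sff_eq_zero hgM hgN hΓM hΓN hφ2 hsub hconf hB x 0
  have hconf₀ : ∀ y, HorConfAt gM gN φ y (Lam (0, 0)) := fun y => hbase y ▸ hconf y
  refine ⟨Lam (0, 0), hbase, ⟨hsub, fun _ => hHCT.2.1 (0, 0), hconf₀⟩,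
    fun z => (hfibre z.1 z.2).trans (hbase z.1), fun X Y hX hY hXh hYh x => ?_⟩
  exact fderiv_sub_fderiv_mem_hor hgM hgN hΓM hΓN hφ2 (hHCT.2.1 (0, 0)).ne' hconf₀ hB (hX x)
    (hY x) hXh hYh

/-- Lemma 7. Assume `dim N ≥ 2` and `Φ = φ_* : TM → TN` is
horizontally conformal with dilatation `Λ` with respect to Cheeger–Gromoll type metrics
`h_{p,q,α}`, `h_{r,s,β}`. Then `φ` is horizontally conformal with constant dilatation
`λ = Λ(0)`, `Λ` is constant (equal to `λ`), and the horizontal distribution `H^φ` is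
integrable. -/
theorem stmt14
    (gM : E → E → E → ℝ) (gN : F → F → F → ℝ)
    (ΓM : E → E → E → E) (ΓN : F → F → F → F)
    (hgM : IsMetric gM) (hgN : IsMetric gN)
    (hΓM : IsLeviCivita gM ΓM) (hΓN : IsLeviCivita gN ΓN)
    (φ : E → F) (hφ : ContDiff ℝ (⊤ : ℕ∞) φ)
    (hsub : ∀ y, Surjective (fderiv ℝ φ y))
    [FiniteDimensional ℝ E] [FiniteDimensional ℝ F]
    (hdim : Module.finrank ℝ F < Module.finrank ℝ E)
    (hdimN : 2 ≤ Module.finrank ℝ F)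
    (p q α r s β : ℝ) (hq : 0 ≤ q) (hs : 0 ≤ s) (hα : 0 < α) (hβ : 0 < β)
    (Lam : E × E → ℝ)
    (hHCT : HCSubT gM ΓM p q α gN ΓN r s β φ Lam) :
    ∃ lam : ℝ,
      (∀ x : E, Lam (x, 0) = lam) ∧
      HCSub gM gN φ (fun _ => lam) ∧
      (∀ z : E × E, Lam z = lam) ∧
      (∀ (X Y : E → E), Differentiable ℝ X → Differentiable ℝ Y →
        (∀ y, X y ∈ Hor gM φ y) → (∀ y, Y y ∈ Hor gM φ y) →
        ∀ x, (fderiv ℝ Y x (X x) - fderiv ℝ X x (Y x)) ∈ Hor gM φ x) :=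
  stmt14_general gM gN ΓM ΓN hgM hgN hΓM hΓN φ hφ hsub hdimN p q α r s β hq hs hα hβ Lam hHCT
end
end
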